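/- Common fixed point theorem: Let (X, d, ≼) be a preordered s-regular b-metric space, x₀ ∈ X, and ℱ = {f_α}_{α∈I} a concordantly isotone family with f_α(x₀) ≼ x₀ for all α. Suppose for every chain C ∈ 𝒞₁(x₀, ℱ, ≼) there exists w ∈ X which is a common lower bound of all chains f_α(C), and there exist z ∈ X and β ∈ I with f_α(w) ≼ w ≼ f_βⁱ(z) for all i ∈ ℕ and all α, and d(f_αⁱ(w), f_βⁱ(z)) → 0. Then ComFix(ℱ) ∩ O_X(x₀) is nonempty and contains a minimal element. -/

import Mathlib

/-!
Regularity of `d` makes `≼` antisymmetric, so concordant isotonicity makes every `f_α`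
monotone. If `f_α w ≼ w ≼ v_i` and `d(f_αⁱ w, v_i) → 0`, then for `i ≥ 1` the chain
`f_αⁱ w ≼ f_α w ≼ w ≼ v_i` and regularity (applied twice) give
`d(f_α w, w) ≤ s⁴ d(f_αⁱ w, v_i) → 0`, so the lower bound `w` supplied by the hypothesis is a
common fixed point. Applied to the singleton chain `{f_α₀ x₀}` this gives a common fixed point
below `x₀`; applied to chains of common fixed points below `x₀` it gives lower bounds of such
chains, and Zorn's lemma yields a minimal one.
-/

open Filter

theorem zorn_ge_nonempty₀ {α : Type*} [Preorder α] (s : Set α)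
    (ih : ∀ c ⊆ s, IsChain (· ≤ ·) c → ∀ y ∈ c, ∃ lb ∈ s, ∀ z ∈ c, lb ≤ z) (x : α)
    (hxs : x ∈ s) : ∃ m, m ≤ x ∧ Minimal (· ∈ s) m := by
  obtain ⟨m, hxm, hm⟩ := zorn_le_nonempty₀ (α := αᵒᵈ) s
    (fun c hcs hc y hy => ih c hcs hc.symm y hy) (OrderDual.toDual x) hxs
  exact ⟨OrderDual.ofDual m, hxm, hm.1, fun y hy hym => hm.2 hy hym⟩

section RegularDist

variable {X : Type*} [Preorder X] {d : X → X → ℝ} {c : ℝ}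

theorem eq_of_le_of_le_of_regular (hd0 : ∀ x y, 0 ≤ d x y) (hdeq : ∀ x y, d x y = 0 ↔ x = y)
    (hreg : ∀ x y z : X, x ≤ y → y ≤ z → max (d x y) (d y z) ≤ c * d x z)
    {x y : X} (hxy : x ≤ y) (hyx : y ≤ x) : x = y := by
  have h := hreg x y x hxy hyx
  rw [(hdeq x x).2 rfl, mul_zero] at h
  exact (hdeq x y).1 (le_antisymm ((le_max_left _ _).trans h) (hd0 x y))

theorem map_eq_self_of_tendsto_dist_iterate (hd0 : ∀ x y, 0 ≤ d x y)
    (hdeq : ∀ x y, d x y = 0 ↔ x = y) (hc : 0 ≤ c)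
    (hreg : ∀ x y z : X, x ≤ y → y ≤ z → max (d x y) (d y z) ≤ c * d x z)
    {g : X → X} (hg : Monotone g) {w : X} {v : ℕ → X} (hgw : g w ≤ w)
    (hwv : ∀ᶠ i in atTop, w ≤ v i)
    (hlim : Tendsto (fun i => d (g^[i] w) (v i)) atTop (nhds 0)) : g w = w := by
  have hbound : ∀ᶠ i in atTop, d (g w) w ≤ c * c * d (g^[i] w) (v i) := by
    filter_upwards [hwv, eventually_ge_atTop 1] with i hwi hi
    have hle : g^[i] w ≤ g w := hg.antitone_iterate_of_map_le hgw hi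
    calc d (g w) w ≤ c * d (g^[i] w) w := (le_max_right _ _).trans (hreg _ _ _ hle hgw)
      _ ≤ c * (c * d (g^[i] w) (v i)) := mul_le_mul_of_nonneg_left
          ((le_max_left _ _).trans (hreg _ _ _ (hle.trans hgw) hwi)) hc
      _ = c * c * d (g^[i] w) (v i) := by ring
  have hle0 : d (g w) w ≤ 0 := ge_of_tendsto (by simpa using hlim.const_mul (c * c)) hbound
  exact (hdeq _ _).1 (le_antisymm hle0 (hd0 _ _))

end RegularDist

theorem monotone_of_map_le_map_of_lt {X : Type*} [Preorder X]
    (antisymm : ∀ x y : X, x ≤ y → y ≤ x → x = y) {g : X → X}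
    (hg : ∀ x y, x < y → g x ≤ g y) : Monotone g := by
  intro x y hxy
  by_cases hyx : y ≤ x
  · rw [antisymm x y hxy hyx]
  · exact hg x y (lt_of_le_not_ge hxy hyx)

section AdmissibleChain

variable {X I : Type*} [Preorder X] {f : I → X → X} {x₀ : X}

/-- Membership in the paper's class `𝒞₁(x₀, ℱ, ≼)`. -/
def IsAdmissibleChain (f : I → X → X) (x₀ : X) (C : Set X) : Prop :=
  IsChain (· ≤ ·) C ∧ C ⊆ {x | x ≤ x₀} ∧ C ⊆ ⋃ α, f α '' {x | x ≤ x₀} ∧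
    (∀ x ∈ C, ∀ α, f α x ≤ x) ∧ ∀ x ∈ C, ∀ y ∈ C, x < y → ∀ α, x ≤ f α y

theorem map_map_le_of_forall_map_le (antisymm : ∀ x y : X, x ≤ y → y ≤ x → x = y)
    (hiso : ∀ x y : X, x < y → ∀ α β, f α x ≤ f β y) (hx₀ : ∀ α, f α x₀ ≤ x₀) (α β : I) :
    f α (f β x₀) ≤ f β x₀ := by
  by_cases hle : x₀ ≤ f β x₀
  · rw [antisymm _ _ (hx₀ β) hle]
    exact hx₀ α
  · exact hiso _ _ (lt_of_le_not_ge (hx₀ β) hle) α β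

theorem isAdmissibleChain_singleton (antisymm : ∀ x y : X, x ≤ y → y ≤ x → x = y)
    (hiso : ∀ x y : X, x < y → ∀ α β, f α x ≤ f β y) (hx₀ : ∀ α, f α x₀ ≤ x₀) (β : I) :
    IsAdmissibleChain f x₀ {f β x₀} := by
  refine ⟨Set.subsingleton_singleton.isChain, by simpa using hx₀ β, ?_, ?_, by simp⟩
  · simpa using ⟨β, x₀, le_rfl, rfl⟩
  · simpa using fun α => map_map_le_of_forall_map_le antisymm hiso hx₀ α β

theorem isAdmissibleChain_of_subset_fixed [Nonempty I] {C : Set X} (hC : IsChain (· ≤ ·) C)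
    (hCS : C ⊆ {x | (∀ α, f α x = x) ∧ x ≤ x₀}) : IsAdmissibleChain f x₀ C := by
  obtain ⟨α₀⟩ := ‹Nonempty I›
  refine ⟨hC, fun x hx => (hCS hx).2, fun x hx => ?_, fun x hx α => ((hCS hx).1 α).le,
    fun x _ y hy hxy α => ((hCS hy).1 α).symm ▸ hxy.le⟩
  exact Set.mem_iUnion.2 ⟨α₀, x, (hCS hx).2, (hCS hx).1 α₀⟩

end AdmissibleChain

theorem stmt_17_general {X : Type*} [Preorder X] {I : Type*} [Nonempty I]
    (d : X → X → ℝ) (s : ℝ)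
    (hd0 : ∀ x y, 0 ≤ d x y) (hdeq : ∀ x y, d x y = 0 ↔ x = y)
    (hreg : ∀ x y z : X, x ≤ y → y ≤ z → max (d x y) (d y z) ≤ s ^ 2 * d x z)
    (f : I → X → X) (x₀ : X)
    (hiso : ∀ (x y : X), x < y → ∀ α β, f α x ≤ f β y)
    (hx₀ : ∀ α, f α x₀ ≤ x₀)
    (hchain : ∀ C : Set X, IsChain (· ≤ ·) C →
      C ⊆ {x | x ≤ x₀} → C ⊆ ⋃ α, f α '' {x | x ≤ x₀} →
      (∀ x ∈ C, ∀ α, f α x ≤ x) →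
      (∀ x ∈ C, ∀ y ∈ C, x < y → ∀ α, x ≤ f α y) →
      ∃ w, (∀ α, ∀ x ∈ C, w ≤ f α x) ∧
        ∃ z β, (∀ α, f α w ≤ w) ∧
          (∀ i : ℕ, 1 ≤ i → w ≤ (f β)^[i] z) ∧
          ∀ α, Filter.Tendsto (fun i : ℕ => d ((f α)^[i] w) ((f β)^[i] z))
            Filter.atTop (nhds 0)) :
    ∃ w, (∀ α, f α w = w) ∧ w ≤ x₀ ∧
      ∀ u, (∀ α, f α u = u) → u ≤ x₀ → ¬ u < w := by
  have hantisymm : ∀ x y : X, x ≤ y → y ≤ x → x = y := fun _ _ =>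
    eq_of_le_of_le_of_regular hd0 hdeq hreg
  have hmono : ∀ α, Monotone (f α) := fun α =>
    monotone_of_map_le_map_of_lt hantisymm fun x y h => hiso x y h α α
  have hlowerFix : ∀ C, IsAdmissibleChain f x₀ C →
      ∃ w, (∀ α, f α w = w) ∧ ∀ α, ∀ x ∈ C, w ≤ f α x := by
    rintro C ⟨h₁, h₂, h₃, h₄, h₅⟩
    obtain ⟨w, hwC, z, β, hfw, hwz, hlim⟩ := hchain C h₁ h₂ h₃ h₄ h₅
    exact ⟨w, fun α => map_eq_self_of_tendsto_dist_iterate hd0 hdeq (sq_nonneg s) hreg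
      (hmono α) (hfw α) (eventually_atTop.2 ⟨1, hwz⟩) (hlim α), hwC⟩
  obtain ⟨α₀⟩ := ‹Nonempty I›
  obtain ⟨w₀, hw₀fix, hw₀⟩ :=
    hlowerFix _ (isAdmissibleChain_singleton hantisymm hiso hx₀ α₀)
  have hw₀x₀ : w₀ ≤ x₀ :=
    (hw₀ α₀ _ rfl).trans ((map_map_le_of_forall_map_le hantisymm hiso hx₀ α₀ α₀).trans (hx₀ α₀))
  obtain ⟨m, -, hm⟩ := zorn_ge_nonempty₀ {x | (∀ α, f α x = x) ∧ x ≤ x₀}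
    (fun C hCS hC y hy => by
      obtain ⟨w, hwfix, hwC⟩ := hlowerFix C (isAdmissibleChain_of_subset_fixed hC hCS)
      have hwle : ∀ x ∈ C, w ≤ x := fun x hx => (hCS hx).1 α₀ ▸ hwC α₀ x hx
      exact ⟨w, ⟨hwfix, (hwle y hy).trans (hCS hy).2⟩, hwle⟩)
    w₀ ⟨hw₀fix, hw₀x₀⟩
  exact ⟨m, hm.1.1, hm.1.2, fun u hu hux₀ hlt => hlt.not_ge (hm.2 ⟨hu, hux₀⟩ hlt.le)⟩

/-- Common fixed point theorem: for a concordantly isotone family ℱ with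
f_α(x₀) ≼ x₀ and the chain/lower-bound/limit condition, ComFix(ℱ) ∩ O_X(x₀)
is nonempty and contains a minimal element. -/
theorem stmt_17 {X : Type*} [Preorder X] {I : Type*} [Nonempty I]
    (d : X → X → ℝ) (s : ℝ) (hs : 1 ≤ s)
    (hd0 : ∀ x y, 0 ≤ d x y) (hdeq : ∀ x y, d x y = 0 ↔ x = y)
    (hdsymm : ∀ x y, d x y = d y x)
    (hdtri : ∀ x y z, d x y ≤ s * (d x z + d z y))
    (hreg : ∀ x y z : X, x ≤ y → y ≤ z → max (d x y) (d y z) ≤ s ^ 2 * d x z)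
    (f : I → X → X) (x₀ : X)
    (hiso : ∀ (x y : X), x < y → ∀ α β, f α x ≤ f β y)
    (hx₀ : ∀ α, f α x₀ ≤ x₀)
    (hchain : ∀ C : Set X, IsChain (· ≤ ·) C →
      C ⊆ {x | x ≤ x₀} → C ⊆ ⋃ α, f α '' {x | x ≤ x₀} →
      (∀ x ∈ C, ∀ α, f α x ≤ x) →
      (∀ x ∈ C, ∀ y ∈ C, x < y → ∀ α, x ≤ f α y) →
      ∃ w, (∀ α, ∀ x ∈ C, w ≤ f α x) ∧
        ∃ z β, (∀ α, f α w ≤ w) ∧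
          (∀ i : ℕ, 1 ≤ i → w ≤ (f β)^[i] z) ∧
          ∀ α, Filter.Tendsto (fun i : ℕ => d ((f α)^[i] w) ((f β)^[i] z))
            Filter.atTop (nhds 0)) :
    ∃ w, (∀ α, f α w = w) ∧ w ≤ x₀ ∧
      ∀ u, (∀ α, f α u = u) → u ≤ x₀ → ¬ u < w :=
  stmt_17_general d s hd0 hdeq hreg f x₀ hiso hx₀ hchain
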